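/- arXiv:1303.0997 — 4 statements merged into one kernel-verified Lean document; each statement's English description precedes it below -/
import Mathlib

section
/- The Kummer transformation holds: for all a ∈ ℂ, positive integer n, and x ∈ ℂ, the confluent hypergeometric function satisfies ₁F₁(a, n; x) = eˣ · ₁F₁(n − a, n; −x), where ₁F₁(a,c;s) = Σ_{k≥0} ((a)ₖ/(c)ₖ) sᵏ/k! with (a)ₖ the Pochhammer symbol. -/
open Complex

/-- The confluent hypergeometric function
`₁F₁(a,c;s) = Σ_{k≥0} (a)ₖ/(c)ₖ · sᵏ/k!`, with `(a)ₖ` the Pochhammer symbol. -/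
noncomputable def oneFone (a c s : ℂ) : ℂ :=
  ∑' k : ℕ, ((ascPochhammer ℂ k).eval a / (ascPochhammer ℂ k).eval c) * s ^ k / k.factorial

/-!
Multiply the exponential series by the series of `₁F₁(c - a, c; -s)`; both converge absolutely
by the ratio test, so the Cauchy product applies. Its `k`-th coefficient is
`sᵏ/k! · Σⱼ C(k,j) (-1)ʲ (c - a)ⱼ / (c)ⱼ`, and the Chu–Vandermonde identity for falling
factorials, applied to `a + k - 1 = (c + k - 1) + (a - c)`, turns this sum into `(a)ₖ / (c)ₖ`.
This works whenever no `(c)ₖ` vanishes, in particular for `c = n ≥ 1`.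
-/

open Polynomial Finset Filter Topology

theorem descPochhammer_eval_add {R : Type*} [CommRing R] (r s : R) (k : ℕ) :
    (descPochhammer R k).eval (r + s) = ∑ ij ∈ antidiagonal k,
      k.choose ij.1 * ((descPochhammer R ij.1).eval r * (descPochhammer R ij.2).eval s) := by
  have smeval_eq_eval (m : ℕ) (x : R) :
      (descPochhammer ℤ m).smeval x = (descPochhammer R m).eval x := by
    rw [← aeval_eq_smeval, ← descPochhammer_map (algebraMap ℤ R), eval_map_algebraMap]
  simpa only [smeval_eq_eval] using Ring.descPochhammer_smeval_add k (Commute.all r s)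

theorem descPochhammer_eval_eq_neg_one_pow_mul {R : Type*} [CommRing R] (r : R) (k : ℕ) :
    (descPochhammer R k).eval r = (-1) ^ k * (ascPochhammer R k).eval (-r) := by
  rw [ascPochhammer_eval_neg_eq_descPochhammer, ← mul_assoc, ← mul_pow, neg_one_mul, neg_neg,
    one_pow, one_mul]

theorem ascPochhammer_eval_mul_eval_add {R : Type*} [CommSemiring R] (c : R) (m n : ℕ) :
    (ascPochhammer R m).eval c * (ascPochhammer R n).eval (c + m) =
      (ascPochhammer R (m + n)).eval c := by
  rw [← ascPochhammer_mul, eval_mul, eval_comp, eval_add, eval_X, eval_natCast]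

theorem ascPochhammer_eval_eq_sum_antidiagonal {R : Type*} [CommRing R] (a c : R) (k : ℕ) :
    (ascPochhammer R k).eval a = ∑ ij ∈ antidiagonal k, k.choose ij.1 *
      ((ascPochhammer R ij.1).eval (c + ij.2) *
        ((-1) ^ ij.2 * (ascPochhammer R ij.2).eval (c - a))) := by
  have h := descPochhammer_eval_add (c + k - 1) (a - c) k
  rw [show c + k - 1 + (a - c) = a + k - 1 by ring, descPochhammer_eval_eq_ascPochhammer,
    show a + k - 1 - k + 1 = a by ring] at h
  rw [h]
  refine sum_congr rfl fun ij hij => ?_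
  have hk : (k : R) = ij.1 + ij.2 := by
    rw [← HasAntidiagonal.mem_antidiagonal.mp hij]; push_cast; ring
  rw [descPochhammer_eval_eq_ascPochhammer, descPochhammer_eval_eq_neg_one_pow_mul, neg_sub,
    show c + k - 1 - ij.1 + 1 = c + ij.2 by rw [hk]; ring]

theorem summable_norm_of_succ_eq_mul {R : Type*} [SeminormedRing R] {f ρ : ℕ → R}
    (hf : ∀ k, f (k + 1) = ρ k * f k) (hρ : Tendsto ρ atTop (𝓝 0)) :
    Summable fun k => ‖f k‖ := by
  refine summable_of_ratio_norm_eventually_le (r := 1 / 2) (by norm_num) ?_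
  have hsmall := (tendsto_norm_zero.comp hρ).eventually_le_const (by norm_num : (0 : ℝ) < 1 / 2)
  filter_upwards [hsmall] with k hk
  rw [norm_norm, norm_norm, hf]
  exact (norm_mul_le _ _).trans (mul_le_mul_of_nonneg_right hk (norm_nonneg _))

noncomputable def oneFoneTerm (a c s : ℂ) (k : ℕ) : ℂ :=
  ((ascPochhammer ℂ k).eval a / (ascPochhammer ℂ k).eval c) * s ^ k / k.factorial

-- No hypothesis on `c` is needed: `mul_div_mul_comm` holds even when a denominator is `0`.
theorem oneFoneTerm_succ (a c s : ℂ) (k : ℕ) :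
    oneFoneTerm a c s (k + 1) = (a + k) / (c + k) * (s / (k + 1)) * oneFoneTerm a c s k := by
  simp only [oneFoneTerm, ascPochhammer_succ_eval, Nat.factorial_succ, Nat.cast_mul, pow_succ,
    mul_div_mul_comm, Nat.cast_succ]
  ring

theorem tendsto_oneFoneTerm_ratio (a c s : ℂ) :
    Tendsto (fun k : ℕ => (a + k) / (c + k) * (s / (k + 1))) atTop (𝓝 0) := by
  have h₁ : Tendsto (fun k : ℕ => (a + k) / (c + k)) atTop (𝓝 1) := by
    simpa using tendsto_add_mul_div_add_mul_atTop_nhds a c (1 : ℂ) one_ne_zero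
  have h₂ : Tendsto (fun k : ℕ => s / (k + 1)) atTop (𝓝 0) := by
    simpa [div_eq_mul_inv] using (tendsto_one_div_add_atTop_nhds_zero_nat (𝕜 := ℂ)).const_mul s
  simpa using h₁.mul h₂

theorem summable_norm_oneFoneTerm (a c s : ℂ) : Summable fun k => ‖oneFoneTerm a c s k‖ :=
  summable_norm_of_succ_eq_mul (oneFoneTerm_succ a c s) (tendsto_oneFoneTerm_ratio a c s)

theorem sum_antidiagonal_pow_div_mul_oneFoneTerm {c : ℂ}
    (hc : ∀ k, (ascPochhammer ℂ k).eval c ≠ 0) (a s : ℂ) (k : ℕ) :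
    ∑ ij ∈ antidiagonal k, s ^ ij.1 / ij.1.factorial * oneFoneTerm (c - a) c (-s) ij.2 =
      oneFoneTerm a c s k := by
  rw [oneFoneTerm, ascPochhammer_eval_eq_sum_antidiagonal a c k, sum_div, sum_mul, sum_div]
  refine sum_congr rfl ?_
  rintro ⟨i, j⟩ hij
  obtain rfl : i + j = k := HasAntidiagonal.mem_antidiagonal.mp hij
  have hfac : ((i + j).choose i : ℂ) * i.factorial * j.factorial = (i + j).factorial := by
    rw [Nat.choose_symm_add]; exact_mod_cast Nat.add_choose_mul_factorial_mul_factorial i j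
  have hchoose : ((i + j).choose i : ℂ) ≠ 0 :=
    Nat.cast_ne_zero.mpr (Nat.choose_pos (by omega)).ne'
  have hpoch : (ascPochhammer ℂ (i + j)).eval c =
      (ascPochhammer ℂ j).eval c * (ascPochhammer ℂ i).eval (c + j) := by
    rw [ascPochhammer_eval_mul_eval_add, add_comm]
  have hci : (ascPochhammer ℂ i).eval (c + j) ≠ 0 := fun h =>
    hc (i + j) (by rw [hpoch, h, mul_zero])
  rw [oneFoneTerm, hpoch, ← hfac, neg_pow, pow_add]
  field_simp

theorem oneFone_eq_exp_mul_oneFone {c : ℂ} (hc : ∀ k, (ascPochhammer ℂ k).eval c ≠ 0)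
    (a s : ℂ) : oneFone a c s = exp s * oneFone (c - a) c (-s) := by
  have hexp : exp s = ∑' k : ℕ, s ^ k / k.factorial := by
    rw [exp_eq_exp_ℂ, NormedSpace.exp_eq_tsum_div]
  change ∑' k, oneFoneTerm a c s k = _ * ∑' k, oneFoneTerm (c - a) c (-s) k
  rw [hexp, tsum_mul_tsum_eq_tsum_sum_antidiagonal_of_summable_norm
    (NormedSpace.norm_expSeries_div_summable s) (summable_norm_oneFoneTerm _ _ _)]
  exact tsum_congr fun k => (sum_antidiagonal_pow_div_mul_oneFoneTerm hc a s k).symm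

/-- The Kummer transformation: `₁F₁(a, n; x) = eˣ · ₁F₁(n − a, n; −x)` for all
`a ∈ ℂ`, positive integers `n` and `x ∈ ℂ`. -/
theorem kummer_transformation (a : ℂ) (n : ℕ) (hn : 1 ≤ n) (x : ℂ) :
    oneFone a n x = Complex.exp x * oneFone ((n : ℂ) - a) n (-x) := by
  refine oneFone_eq_exp_mul_oneFone (fun k => ?_) a x
  rw [← ascPochhammer_eval_cast]
  exact Nat.cast_ne_zero.mpr (ascPochhammer_pos k n hn).ne'
end

section
/- For all (ξ, λ, x, y, t) ∈ ℂ^{2n+3} the series Φ_{ξ,λ}(x+iy, t) = e^{iλt} e^{−λ(x²+y²)/4} (1 + Σ_{k≥1} ((x²+y²)ᵏ / ((n)ₖ k! 4ᵏ)) ∏_{d=0}^{k−1} (λ(2d+n) − ξ)) converges locally uniformly on ℂ^{2n+3} and defines an entire (holomorphic) function of (ξ, λ, x, y, t). -/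
/-!
On the ball `‖p‖ ≤ R`, the estimates `(n)ₖ ≥ k!` (as `n ≥ 1`), `|x² + y²| ≤ 2nR²` and
`|λ(2d+n) − ξ| ≤ (n+2)R(d+1)` bound the `k`-th term by `Cᵏ/k!` with `C = C(n, R)`, an
exponential majorant. The Weierstrass M-test gives locally uniform convergence. By the Cauchy
estimate, a bound `M` on a unit ball bounds the derivative at its centre by `2M`, so the
derivatives of the terms have a summable majorant near every point as well and the series may
be differentiated termwise; the exponential prefactors are entire.
-/

open Complex Filter

noncomputable section

variable (n : ℕ)

/-- The `k`-th term of the series defining the spherical function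
`Φ_{ξ,λ}(x+iy,t)` (without the exponential prefactor); here the coordinates are
`p = (ξ, λ, x, y, t) ∈ ℂ × ℂ × ℂⁿ × ℂⁿ × ℂ`, `x² + y²` means `Σⱼ (xⱼ² + yⱼ²)`,
and the `k = 0` term equals `1`. -/
def phiTerm (p : ℂ × ℂ × (Fin n → ℂ) × (Fin n → ℂ) × ℂ) (k : ℕ) : ℂ :=
  (∑ j, (p.2.2.1 j ^ 2 + p.2.2.2.1 j ^ 2)) ^ k /
      ((ascPochhammer ℂ k).eval (n : ℂ) * k.factorial * 4 ^ k) *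
    ∏ d ∈ Finset.range k, (p.2.1 * (2 * d + n) - p.1)

/-- The spherical function `Φ_{ξ,λ}(x+iy,t)`, defined for all complex
parameters and variables. -/
def sphericalFun (p : ℂ × ℂ × (Fin n → ℂ) × (Fin n → ℂ) × ℂ) : ℂ :=
  Complex.exp (I * p.2.1 * p.2.2.2.2) *
    Complex.exp (-p.2.1 * (∑ j, (p.2.2.1 j ^ 2 + p.2.2.2.1 j ^ 2)) / 4) *
    ∑' k : ℕ, phiTerm n p k

open Metric Finset Nat

theorem tendstoLocallyUniformly_tsum_nat_of_norm_le {E F : Type*} [SeminormedAddCommGroup E]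
    [NormedAddCommGroup F] [CompleteSpace F] {f : ℕ → E → F}
    (hf : ∀ R : ℝ, ∃ u : ℕ → ℝ, Summable u ∧ ∀ k p, ‖p‖ ≤ R → ‖f k p‖ ≤ u k) :
    TendstoLocallyUniformly (fun N p => ∑ k ∈ range N, f k p) (fun p => ∑' k, f k p) atTop := by
  intro V hV p
  obtain ⟨u, hu, hfu⟩ := hf (‖p‖ + 1)
  refine ⟨ball p 1, ball_mem_nhds p one_pos, tendstoUniformlyOn_tsum_nat hu ?_ V hV⟩
  intro k q hq
  rw [mem_ball, dist_eq_norm] at hq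
  exact hfu k q (by linarith [norm_le_norm_add_norm_sub' q p])

section HolomorphicSeries

variable {ι E F : Type*} [NormedAddCommGroup E] [NormedSpace ℂ E]
  [NormedAddCommGroup F] [NormedSpace ℂ F]

theorem Complex.norm_fderiv_le_of_forall_norm_le {f : E → F} {c : E} {r M : ℝ}
    (hf : DifferentiableOn ℂ f (ball c r)) (hr : 0 < r) (hM : ∀ z ∈ ball c r, ‖f z‖ ≤ M) :
    ‖fderiv ℂ f c‖ ≤ 2 * M / r := by
  refine Complex.norm_fderiv_le_div_of_mapsTo_ball hf (fun z hz => ?_) hr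
  rw [mem_closedBall, dist_eq_norm, two_mul]
  exact (norm_sub_le _ _).trans (add_le_add (hM z hz) (hM c (mem_ball_self hr)))

theorem differentiable_tsum_of_norm_le [CompleteSpace F] {f : ι → E → F}
    (hdiff : ∀ i, Differentiable ℂ (f i))
    (hf : ∀ R : ℝ, ∃ u : ι → ℝ, Summable u ∧ ∀ i p, ‖p‖ ≤ R → ‖f i p‖ ≤ u i) :
    Differentiable ℂ (fun p => ∑' i, f i p) := by
  intro p₀
  obtain ⟨u, hu, hfu⟩ := hf (‖p₀‖ + 2)
  have hball : ∀ q ∈ ball p₀ 1, ∀ z ∈ ball q 1, ‖z‖ ≤ ‖p₀‖ + 2 := by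
    intro q hq z hz
    rw [mem_ball, dist_eq_norm] at hq hz
    linarith [norm_le_norm_add_norm_sub' z q, norm_le_norm_add_norm_sub' q p₀]
  have hderiv : ∀ i, ∀ q ∈ ball p₀ 1, ‖fderiv ℂ (f i) q‖ ≤ 2 * u i := fun i q hq => by
    simpa using Complex.norm_fderiv_le_of_forall_norm_le (hdiff i).differentiableOn one_pos
      fun z hz => hfu i z (hball q hq z hz)
  have hsummable : Summable (f · p₀) :=
    .of_norm_bounded hu fun i => hfu i p₀ (by linarith [norm_nonneg p₀])
  exact (hasFDerivAt_tsum_of_isPreconnected (hu.mul_left 2) isOpen_ball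
    (convex_ball p₀ 1).isPreconnected (fun i q _ => (hdiff i q).hasFDerivAt) hderiv
    (mem_ball_self one_pos) hsummable (mem_ball_self one_pos)).differentiableAt

end HolomorphicSeries

theorem norm_sum_sq_add_sq_le {m : ℕ} {x y : Fin m → ℂ} {R : ℝ} (hx : ‖x‖ ≤ R) (hy : ‖y‖ ≤ R) :
    ‖∑ j, (x j ^ 2 + y j ^ 2)‖ ≤ 2 * m * R ^ 2 := by
  have hsq : ∀ (z : Fin m → ℂ), ‖z‖ ≤ R → ∀ j, ‖z j ^ 2‖ ≤ R ^ 2 := fun z hz j => by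
    rw [norm_pow]
    exact pow_le_pow_left₀ (norm_nonneg _) ((norm_le_pi_norm z j).trans hz) 2
  calc ‖∑ j, (x j ^ 2 + y j ^ 2)‖ ≤ ∑ _j : Fin m, (R ^ 2 + R ^ 2) :=
        (norm_sum_le _ _).trans <| sum_le_sum fun j _ =>
          (norm_add_le _ _).trans (add_le_add (hsq x hx j) (hsq y hy j))
    _ = 2 * m * R ^ 2 := by
        simp only [sum_const, Finset.card_univ, Fintype.card_fin, smul_add, nsmul_eq_mul]
        ring

theorem norm_prod_range_mul_sub_le {a b : ℂ} {R : ℝ} (ha : ‖a‖ ≤ R) (hb : ‖b‖ ≤ R) (k : ℕ) :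
    ‖∏ d ∈ range k, (a * (2 * d + n) - b)‖ ≤ ((n + 2) * R) ^ k * k ! := by
  have hR : 0 ≤ R := (norm_nonneg a).trans ha
  have hfactor : ∀ d : ℕ, ‖a * (2 * d + n) - b‖ ≤ (n + 2) * R * (d + 1) := fun d => by
    have hcast : ‖(2 * d + n : ℂ)‖ = 2 * d + n := by
      exact_mod_cast Complex.norm_natCast (2 * d + n)
    calc ‖a * (2 * d + n) - b‖ ≤ R * (2 * d + n) + R := by
          refine (norm_sub_le _ _).trans (add_le_add ?_ hb)
          rw [norm_mul, hcast]
          gcongr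
      _ ≤ (n + 2) * R * (d + 1) := by
          have hnR : 0 ≤ (n : ℝ) * R := by positivity
          nlinarith [mul_nonneg hnR (Nat.cast_nonneg (α := ℝ) d)]
  calc ‖∏ d ∈ range k, (a * (2 * d + n) - b)‖
      ≤ ∏ d ∈ range k, ((n + 2) * R * (d + 1)) := by
        rw [norm_prod]
        exact prod_le_prod (fun _ _ => norm_nonneg _) fun d _ => hfactor d
    _ = ((n + 2) * R) ^ k * k ! := by
        rw [prod_mul_distrib, prod_const, card_range, ← prod_range_add_one_eq_factorial]
        push_cast
        rfl

theorem factorial_le_norm_ascPochhammer_eval (hn : 1 ≤ n) (k : ℕ) :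
    (k ! : ℝ) ≤ ‖(ascPochhammer ℂ k).eval (n : ℂ)‖ := by
  rw [ascPochhammer_nat_eq_natCast_ascFactorial, Complex.norm_natCast, ← one_ascFactorial]
  exact_mod_cast ascFactorial_le k hn


theorem norm_phiTerm_le (hn : 1 ≤ n) {R : ℝ} {p : ℂ × ℂ × (Fin n → ℂ) × (Fin n → ℂ) × ℂ}
    (hp : ‖p‖ ≤ R) (k : ℕ) : ‖phiTerm n p k‖ ≤ (n * (n + 2) * R ^ 3 / 2) ^ k / k ! := by
  obtain ⟨ξ, lam, x, y, t⟩ := p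
  have hξ : ‖ξ‖ ≤ R := (norm_fst_le _).trans hp
  have hrest : ‖(lam, x, y, t)‖ ≤ R := (norm_snd_le _).trans hp
  have hlam : ‖lam‖ ≤ R := (norm_fst_le _).trans hrest
  have hx : ‖x‖ ≤ R := ((norm_fst_le _).trans (norm_snd_le _)).trans hrest
  have hy : ‖y‖ ≤ R := (((norm_fst_le _).trans (norm_snd_le _)).trans (norm_snd_le _)).trans hrest
  have hden : (k ! : ℝ) * k ! * 4 ^ k ≤ ‖(ascPochhammer ℂ k).eval (n : ℂ) * k ! * 4 ^ k‖ := by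
    rw [norm_mul, norm_mul, norm_pow, Complex.norm_natCast, Complex.norm_ofNat]
    gcongr
    exact factorial_le_norm_ascPochhammer_eval n hn k
  calc ‖phiTerm n (ξ, lam, x, y, t) k‖
      ≤ (2 * n * R ^ 2) ^ k / (k ! * k ! * 4 ^ k) * (((n + 2) * R) ^ k * k !) := by
        rw [phiTerm, norm_mul, norm_div, norm_pow]
        gcongr
        · exact norm_sum_sq_add_sq_le hx hy
        · exact norm_prod_range_mul_sub_le n hlam hξ k
    _ = (n * (n + 2) * R ^ 3 / 2) ^ k / k ! := by
        rw [show (n * (n + 2) * R ^ 3 / 2 : ℝ) = 2 * n * R ^ 2 * ((n + 2) * R) / 4 by ring,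
          div_pow, mul_pow]
        field_simp
        simp only [← mul_pow]
        ring

theorem differentiable_phiTerm (k : ℕ) :
    Differentiable ℂ (fun p : ℂ × ℂ × (Fin n → ℂ) × (Fin n → ℂ) × ℂ => phiTerm n p k) := by
  unfold phiTerm
  fun_prop

theorem exists_summable_bound_phiTerm (hn : 1 ≤ n) (R : ℝ) :
    ∃ u : ℕ → ℝ, Summable u ∧ ∀ k (p : ℂ × ℂ × (Fin n → ℂ) × (Fin n → ℂ) × ℂ), ‖p‖ ≤ R →
      ‖phiTerm n p k‖ ≤ u k :=
  ⟨_, Real.summable_pow_div_factorial _, fun k _ hp => norm_phiTerm_le n hn hp k⟩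

/-- The series defining `Φ_{ξ,λ}(x+iy,t)` converges for every
`(ξ,λ,x,y,t) ∈ ℂ^{2n+3}`, the convergence of its partial sums is locally
uniform, and the resulting function `Φ` is entire (holomorphic) on `ℂ^{2n+3}`. -/
theorem sphericalFun_entire (hn : 1 ≤ n) :
    (∀ p : ℂ × ℂ × (Fin n → ℂ) × (Fin n → ℂ) × ℂ, Summable (phiTerm n p)) ∧
    TendstoLocallyUniformly
      (fun (N : ℕ) (p : ℂ × ℂ × (Fin n → ℂ) × (Fin n → ℂ) × ℂ) =>
        ∑ k ∈ Finset.range N, phiTerm n p k)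
      (fun p => ∑' k : ℕ, phiTerm n p k) atTop ∧
    Differentiable ℂ (sphericalFun n) := by
  have hbound := exists_summable_bound_phiTerm n hn
  refine ⟨fun p => ?_, tendstoLocallyUniformly_tsum_nat_of_norm_le hbound, ?_⟩
  · obtain ⟨u, hu, hpu⟩ := hbound ‖p‖
    exact .of_norm_bounded hu fun k => hpu k p le_rfl
  · have hseries := differentiable_tsum_of_norm_le (differentiable_phiTerm n) hbound
    unfold sphericalFun
    fun_prop

end
end

section
/- Fix a nonzero even compactly supported continuous function h : ℝ → ℂ. Then the function λ ↦ |ℱh(λ)| e^{λ/2} is unbounded on [0,∞), where ℱh is the Fourier transform of h. -/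
open Complex MeasureTheory

/-!
If `‖ℱh(λ)‖ e^{λ/2}` were bounded by `C` on `[0, ∞)`, evenness of `h` would give
`‖𝓕 h ξ‖ ≤ C e^{-π|ξ|}` for every real `ξ` (Mathlib normalises `𝓕 h ξ = ℱh(2πξ)`). The inverse
Fourier integral `w ↦ ∫ 𝓕 h ξ e^{2πiξw} dξ` then converges, with a locally uniform integrable
majorant, on the strip `|Im w| < 1/2`, so it is holomorphic there, and by Fourier inversion it
restricts to `h` on the real line. Since `h` vanishes on a real half-line, the identity theorem
forces this holomorphic function, and hence `h`, to vanish.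
-/

open Set Filter Real
open scoped FourierTransform Topology

theorem integrable_abs_pow_mul_exp_neg_mul_abs (n : ℕ) {b : ℝ} (hb : 0 < b) :
    Integrable fun x : ℝ ↦ |x| ^ n * rexp (-b * |x|) := by
  have hIoi : IntegrableOn (fun x : ℝ ↦ |x| ^ n * rexp (-b * |x|)) (Ioi 0) :=
    (integrableOn_rpow_mul_exp_neg_mul_rpow (s := n) (by linarith [n.cast_nonneg (α := ℝ)])
      one_pos hb).congr_fun (fun x hx ↦ by simp [abs_of_pos (mem_Ioi.1 hx)]) measurableSet_Ioi
  rw [← integrableOn_univ, ← Iio_union_Ici (a := 0), integrableOn_union,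
    integrableOn_Ici_iff_integrableOn_Ioi]
  refine ⟨?_, hIoi⟩
  rw [← (Measure.measurePreserving_neg volume).integrableOn_comp_preimage
    (Homeomorph.neg ℝ).measurableEmbedding]
  simpa [Function.comp_def] using hIoi

noncomputable def complexFourierInv (f : ℝ → ℂ) (w : ℂ) : ℂ :=
  ∫ ξ : ℝ, f ξ * cexp (2 * π * ξ * I * w)

theorem complexFourierInv_ofReal (f : ℝ → ℂ) (t : ℝ) : complexFourierInv f t = 𝓕⁻ f t := by
  rw [complexFourierInv, Real.fourierInv_eq']
  congr 1 with ξ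
  rw [smul_eq_mul, mul_comm, RCLike.inner_apply, conj_trivial]
  push_cast
  ring_nf

theorem norm_cexp_two_pi_mul_I_mul (ξ : ℝ) (w : ℂ) :
    ‖cexp (2 * π * ξ * I * w)‖ = rexp (-2 * π * ξ * w.im) := by
  rw [norm_exp]
  simp [mul_re, mul_im]

theorem norm_mul_cexp_le_of_abs_im_le {f : ℝ → ℂ} {C a b : ℝ}
    (hf : ∀ ξ, ‖f ξ‖ ≤ C * rexp (-2 * π * a * |ξ|)) {w : ℂ} (hw : |w.im| ≤ b) (ξ : ℝ) :
    ‖f ξ * cexp (2 * π * ξ * I * w)‖ ≤ C * rexp (-2 * π * (a - b) * |ξ|) := by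
  have hexp : -2 * π * ξ * w.im ≤ 2 * π * b * |ξ| := by
    have : -(ξ * w.im) ≤ |ξ| * b :=
      calc -(ξ * w.im) ≤ |ξ * w.im| := neg_le_abs _
        _ = |ξ| * |w.im| := abs_mul _ _
        _ ≤ |ξ| * b := by gcongr
    nlinarith [pi_pos]
  calc ‖f ξ * cexp (2 * π * ξ * I * w)‖
      ≤ C * rexp (-2 * π * a * |ξ|) * rexp (2 * π * b * |ξ|) := by
        rw [norm_mul, norm_cexp_two_pi_mul_I_mul]
        exact mul_le_mul (hf ξ) (exp_le_exp.2 hexp) (exp_nonneg _)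
          ((norm_nonneg _).trans (hf ξ))
    _ = C * rexp (-2 * π * (a - b) * |ξ|) := by
        rw [mul_assoc, ← Real.exp_add]
        ring_nf

theorem differentiableOn_complexFourierInv {f : ℝ → ℂ} {C a : ℝ}
    (hf_meas : AEStronglyMeasurable f) (hf : ∀ ξ, ‖f ξ‖ ≤ C * rexp (-2 * π * a * |ξ|)) :
    DifferentiableOn ℂ (complexFourierInv f) (im ⁻¹' Ioo (-a) a) := by
  intro w₀ hw₀
  obtain ⟨b, hw₀b, hba⟩ := exists_between (abs_lt.2 hw₀)
  have hrate : 0 < 2 * π * (a - b) := mul_pos (by positivity) (sub_pos.2 hba)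
  have hs : im ⁻¹' Ioo (-b) b ∈ 𝓝 w₀ :=
    (isOpen_Ioo.preimage continuous_im).mem_nhds (abs_lt.1 hw₀b)
  have hmeas : ∀ w : ℂ, AEStronglyMeasurable fun ξ : ℝ ↦ f ξ * cexp (2 * π * ξ * I * w) :=
    fun w ↦ hf_meas.mul (by fun_prop : Continuous _).aestronglyMeasurable
  have hdom (n : ℕ) := (integrable_abs_pow_mul_exp_neg_mul_abs n hrate).const_mul C
  refine (hasDerivAt_integral_of_dominated_loc_of_deriv_le
    (F' := fun w ξ ↦ f ξ * cexp (2 * π * ξ * I * w) * (2 * π * ξ * I))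
    (bound := fun ξ ↦ 2 * π * (C * (|ξ| ^ 1 * rexp (-(2 * π * (a - b)) * |ξ|)))) hs
    (Eventually.of_forall hmeas) ?_ ?_ ?_ ((hdom 1).const_mul _) ?_).2.differentiableAt
    |>.differentiableWithinAt
  · refine (hdom 0).mono' (hmeas w₀) (ae_of_all _ fun ξ ↦ ?_)
    simpa [neg_mul, mul_assoc] using norm_mul_cexp_le_of_abs_im_le hf hw₀b.le ξ
  · exact (hmeas w₀).mul
      (by fun_prop : Continuous fun ξ : ℝ ↦ (2 * π * ξ * I : ℂ)).aestronglyMeasurable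
  · refine ae_of_all _ fun ξ w hw ↦ ?_
    have hle := norm_mul_cexp_le_of_abs_im_le hf (abs_lt.2 hw).le ξ
    have hnorm : ‖(2 * π * ξ * I : ℂ)‖ = 2 * π * |ξ| := by simp [abs_of_pos pi_pos]
    rw [norm_mul, hnorm]
    calc _ ≤ C * rexp (-2 * π * (a - b) * |ξ|) * (2 * π * |ξ|) := by gcongr
      _ = _ := by ring_nf
  · refine ae_of_all _ fun ξ w _ ↦ ?_
    simpa [mul_assoc] using
      ((hasDerivAt_id w).const_mul (2 * π * ξ * I : ℂ)).cexp.const_mul (f ξ)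

theorem eq_zero_of_differentiableOn_strip {g : ℂ → ℂ} {a : ℝ} (ha : 0 < a)
    (hg : DifferentiableOn ℂ g (im ⁻¹' Ioo (-a) a)) (hzero : ∀ᶠ t : ℝ in atTop, g t = 0)
    (t : ℝ) : g t = 0 := by
  have hreal : ∀ s : ℝ, (s : ℂ) ∈ im ⁻¹' Ioo (-a) a := fun s ↦ by simp [ha]
  obtain ⟨R, hR⟩ := hzero.exists_forall_of_atTop
  have hfreq : ∃ᶠ z in 𝓝[≠] ((R + 1 : ℝ) : ℂ), g z = 0 := by
    have hofReal : Tendsto ofReal (𝓝[≠] (R + 1)) (𝓝[≠] ((R + 1 : ℝ) : ℂ)) :=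
      continuous_ofReal.continuousWithinAt.tendsto_nhdsWithin fun _ hs ↦ ofReal_injective.ne hs
    refine hofReal.frequently (Eventually.frequently ?_)
    filter_upwards [nhdsWithin_le_nhds (lt_mem_nhds (lt_add_one R))] with s hs using hR s hs.le
  exact (hg.analyticOnNhd (isOpen_Ioo.preimage continuous_im))
    |>.eqOn_zero_of_preconnected_of_frequently_eq_zero
      ((convex_Ioo (-a) a).linear_preimage imLm).isPreconnected (hreal _) hfreq (hreal t)

theorem eq_zero_of_norm_fourier_le_exp {f : ℝ → ℂ} {C a : ℝ} (ha : 0 < a) (hf : Continuous f)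
    (hf_int : Integrable f) (hdecay : ∀ ξ, ‖𝓕 f ξ‖ ≤ C * rexp (-2 * π * a * |ξ|))
    (hzero : ∀ᶠ t in atTop, f t = 0) : f = 0 := by
  have hFf_cont : Continuous (𝓕 f) :=
    VectorFourier.fourierIntegral_continuous Real.continuous_fourierChar continuous_inner hf_int
  have hFf_int : Integrable (𝓕 f) :=
    ((integrable_abs_pow_mul_exp_neg_mul_abs 0 (by positivity : 0 < 2 * π * a)).const_mul C).mono'
      hFf_cont.aestronglyMeasurable (ae_of_all _ fun ξ ↦ by simpa using hdecay ξ)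
  have hinv : ∀ t : ℝ, complexFourierInv (𝓕 f) t = f t := fun t ↦ by
    rw [complexFourierInv_ofReal, hf_int.fourierInv_fourier_eq hFf_int hf.continuousAt]
  funext t
  rw [← hinv]
  exact eq_zero_of_differentiableOn_strip ha
    (differentiableOn_complexFourierInv hFf_cont.aestronglyMeasurable hdecay)
    (hzero.mono fun s hs ↦ (hinv s).trans hs) t

theorem fourier_eq_integral_mul_cexp (f : ℝ → ℂ) (ξ : ℝ) :
    𝓕 f ξ = ∫ t : ℝ, f t * cexp (-I * ↑(2 * π * ξ) * t) := by
  rw [Real.fourier_real_eq_integral_exp_smul]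
  congr 1 with t
  rw [smul_eq_mul, mul_comm]
  push_cast
  ring_nf

theorem fourier_neg_of_even {V E : Type*} [NormedAddCommGroup V] [InnerProductSpace ℝ V]
    [MeasurableSpace V] [BorelSpace V] [FiniteDimensional ℝ V] [NormedAddCommGroup E]
    [NormedSpace ℂ E] {f : V → E} (heven : ∀ v, f (-v) = f v) (ξ : V) :
    𝓕 f (-ξ) = 𝓕 f ξ := by
  simp_rw [← Real.fourierInv_eq_fourier_neg, Real.fourierInv_eq_fourier_comp_neg, heven]

theorem fourier_abs_of_even {E : Type*} [NormedAddCommGroup E] [NormedSpace ℂ E] {f : ℝ → E}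
    (heven : ∀ t, f (-t) = f t) (ξ : ℝ) : 𝓕 f |ξ| = 𝓕 f ξ := by
  rcases abs_choice ξ with h | h <;> rw [h]
  exact fourier_neg_of_even heven ξ

/-- For a nonzero, even, compactly supported continuous function `h : ℝ → ℂ`,
the function `λ ↦ |ℱh(λ)| e^{λ/2}` is unbounded on `[0,∞)`, where
`ℱh(λ) = ∫ h(t) e^{−iλt} dt`. -/
theorem fourier_of_compact_support_not_exp_decaying
    (h : ℝ → ℂ) (hcont : Continuous h) (hsupp : HasCompactSupport h)
    (heven : ∀ t : ℝ, h (-t) = h t) (hne : h ≠ 0) :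
    ∀ C : ℝ, ∃ lam : ℝ, 0 ≤ lam ∧
      C < ‖∫ t : ℝ, h t * Complex.exp (-I * lam * t)‖ * Real.exp (lam / 2) := by
  by_contra! ⟨C, hC⟩
  have hdecay : ∀ ξ, ‖𝓕 h ξ‖ ≤ C * rexp (-2 * π * (1 / 2) * |ξ|) := fun ξ ↦ by
    have := hC (2 * π * |ξ|) (by positivity)
    rw [← fourier_eq_integral_mul_cexp, fourier_abs_of_even heven] at this
    rwa [show -2 * π * (1 / 2) * |ξ| = -(2 * π * |ξ| / 2) by ring, Real.exp_neg,
      ← div_eq_mul_inv, le_div_iff₀ (exp_pos _)]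
  have hzero : ∀ᶠ t in atTop, h t = 0 :=
    (hasCompactSupport_iff_eventuallyEq.mp hsupp).filter_mono
      (coclosedCompact_eq_cocompact (X := ℝ) ▸ atTop_le_cocompact)
  exact hne (eq_zero_of_norm_fourier_le_exp one_half_pos hcont
    (hcont.integrable_of_hasCompactSupport hsupp) hdecay hzero)
end

section
/- Let F : ℂ² → ℂ be entire and suppose F vanishes on the countable union of half-lines through the origin with slopes (2j+n)⁻¹, j ∈ ℕ, i.e., the restriction G_j(λ) := F(λ(2j+n), λ) vanishes for all λ > 0 and all j. Then F vanishes identically. -/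
open Filter Topology

/-- An entire function on ℂ² vanishing on all the half-lines
`L_j = {(λ(2j+n), λ) : λ > 0} ⊂ ℝ² ⊂ ℂ²`, `j ∈ ℕ`, vanishes identically. -/
theorem entire_eq_zero_of_vanishing_on_halflines (n : ℕ) (hn : 1 ≤ n)
    (H : ℂ × ℂ → ℂ) (hH : Differentiable ℂ H)
    (hvanish : ∀ (j : ℕ) (lam : ℝ), 0 < lam →
      H (((lam * (2 * j + n) : ℝ) : ℂ), ((lam : ℝ) : ℂ)) = 0) :
    ∀ w : ℂ × ℂ, H w = 0 := by
  have hnpos : ∀ j : ℕ, (0:ℝ) < 2 * j + n := by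
    intro j
    have h1 : (1:ℝ) ≤ n := by exact_mod_cast hn
    have h2 : (0:ℝ) ≤ 2 * j := by positivity
    linarith
  -- Step 1: for each j, the slice z ↦ H ((2j+n)·z, z) vanishes on all of ℂ.
  have step1 : ∀ (j : ℕ) (z : ℂ), H (((2 * j + n : ℝ) : ℂ) * z, z) = 0 := by
    intro j
    have hgd : Differentiable ℂ (fun z : ℂ => H (((2 * j + n : ℝ) : ℂ) * z, z)) :=
      hH.comp ((differentiable_id.const_mul _).prodMk differentiable_id)
    have hga : AnalyticOnNhd ℂ (fun z : ℂ => H (((2 * j + n : ℝ) : ℂ) * z, z)) Set.univ :=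
      fun z _ => hgd.analyticAt z
    have hfreq : ∃ᶠ z in 𝓝[≠] (1 : ℂ),
        (fun z : ℂ => H (((2 * j + n : ℝ) : ℂ) * z, z)) z = 0 := by
      have htend : Tendsto (fun k : ℕ => ((1 + 1 / (k + 1) : ℝ) : ℂ)) atTop (𝓝[≠] 1) := by
        apply tendsto_nhdsWithin_of_tendsto_nhds_of_eventually_within
        · have h0 : Tendsto (fun k : ℕ => (1 + 1 / (k + 1) : ℝ)) atTop (𝓝 1) := by
            have := tendsto_one_div_add_atTop_nhds_zero_nat (𝕜 := ℝ)
            simpa using (tendsto_const_nhds.add this)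
          have := (Complex.continuous_ofReal.tendsto 1).comp h0
          simpa [Function.comp_def] using this
        · filter_upwards with k
          simp only [Set.mem_compl_iff, Set.mem_singleton_iff]
          intro h
          have h' : (1 + 1 / (k + 1) : ℝ) = 1 := by exact_mod_cast h
          have hpos : (0:ℝ) < 1 / (k + 1) := by positivity
          linarith
      refine htend.frequently (Frequently.of_forall fun k => ?_)
      have hpos : (0:ℝ) < 1 + 1 / (k + 1) := by positivity
      have h := hvanish j (1 + 1 / (k + 1)) hpos
      have hcast : (((1 + 1 / (k + 1) : ℝ) * (2 * j + n) : ℝ) : ℂ)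
          = ((2 * j + n : ℝ) : ℂ) * ((1 + 1 / (k + 1) : ℝ) : ℂ) := by push_cast; ring
      rw [hcast] at h
      exact h
    have := hga.eqOn_zero_of_preconnected_of_frequently_eq_zero
      isPreconnected_univ (Set.mem_univ 1) hfreq
    intro z
    exact this (Set.mem_univ z)
  -- Step 2: H (ξ, λ) = 0 for ξ ≠ 0, since λ ↦ H (ξ, λ) has zeros ξ/(2j+n) → 0.
  have step2 : ∀ (ξ : ℂ), ξ ≠ 0 → ∀ lam : ℂ, H (ξ, lam) = 0 := by
    intro ξ hξ
    have hφd : Differentiable ℂ (fun lam : ℂ => H (ξ, lam)) :=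
      hH.comp ((differentiable_const ξ).prodMk differentiable_id)
    have hφa : AnalyticOnNhd ℂ (fun lam : ℂ => H (ξ, lam)) Set.univ :=
      fun z _ => hφd.analyticAt z
    have hcne : ∀ j : ℕ, ((2 * j + n : ℝ) : ℂ) ≠ 0 := by
      intro j
      exact_mod_cast (hnpos j).ne'
    have hfreq : ∃ᶠ z in 𝓝[≠] (0 : ℂ), (fun lam : ℂ => H (ξ, lam)) z = 0 := by
      have htend : Tendsto (fun j : ℕ => ξ / ((2 * j + n : ℝ) : ℂ)) atTop (𝓝[≠] 0) := by
        apply tendsto_nhdsWithin_of_tendsto_nhds_of_eventually_within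
        · have h1 : Tendsto (fun j : ℕ => (2 * j + n : ℝ)) atTop atTop := by
            apply Filter.tendsto_atTop_add_const_right
            exact (tendsto_natCast_atTop_atTop (R := ℝ)).const_mul_atTop (by norm_num)
          have h2 : Tendsto (fun j : ℕ => ((2 * j + n : ℝ))⁻¹) atTop (𝓝 0) :=
            tendsto_inv_atTop_zero.comp h1
          have h3 := (Complex.continuous_ofReal.tendsto 0).comp h2
          simp only [Function.comp_def, Complex.ofReal_inv, Complex.ofReal_zero] at h3
          have h4 := h3.const_mul ξ
          simpa [div_eq_mul_inv] using h4
        · filter_upwards with j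
          simp only [Set.mem_compl_iff, Set.mem_singleton_iff]
          exact div_ne_zero hξ (hcne j)
      refine htend.frequently (Frequently.of_forall fun j => ?_)
      have h := step1 j (ξ / ((2 * j + n : ℝ) : ℂ))
      rwa [mul_div_cancel₀ ξ (hcne j)] at h
    have := hφa.eqOn_zero_of_preconnected_of_frequently_eq_zero
      isPreconnected_univ (Set.mem_univ 0) hfreq
    intro lam
    exact this (Set.mem_univ lam)
  -- Step 3: continuity handles ξ = 0.
  intro w
  obtain ⟨ξ, lam⟩ := w
  rcases eq_or_ne ξ 0 with rfl | hξ
  · have hdense : Dense {x : ℂ | x ≠ 0} := dense_compl_singleton 0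
    have hcont : Continuous fun x : ℂ => H (x, lam) :=
      (hH.comp (differentiable_id.prodMk (differentiable_const lam))).continuous
    have := hcont.ext_on hdense continuous_const (fun x hx => step2 x hx lam)
    exact congrFun this 0
  · exact step2 ξ hξ lam
end
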